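/- arXiv:2402.05838 — 3 statements merged into one kernel-verified Lean document; each statement's English description precedes it below -/
import Mathlib

section
/- Let u, v be words over A with |v| ≤ |u|. Then: (1) binom_q(u,v) has degree at most |v|·(|u|−|v|); (2) the coefficient of q^{|v|(|u|−|v|)} in binom_q(u,v) equals 1 if v is a prefix of u and equals 0 otherwise; (3) the constant coefficient of binom_q(u,v) equals 1 if v is a suffix of u and equals 0 otherwise; (4) if v occurs as a subword of u, then the leading coefficient of binom_q(u,v) equals 1 and the lowest-degree nonzero coefficient of binom_q(u,v) equals 1. -/
/-!
Since the coefficients lie in `ℕ`, no cancellation occurs: the degree and the order (lowest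
exponent) of a sum are the maximum and minimum of those of the summands, and `binom_q(u,v) ≠ 0`
exactly when `v` is a subword of `u`. Everything then follows by induction along the recursion
`binom_q(ua,vb) = q^|vb| binom_q(u,vb) + δ_{a,b} binom_q(u,v)`. For the extreme coefficients
one must know which summand dominates. The inequalities
`deg binom_q(u,v) ≤ |v| + deg binom_q(u,vb)` (when `vb` is a subword of `u`) and
`ord binom_q(u,v) ≤ |v| + ord binom_q(u,vb)` say that the top term comes from the first summand
as soon as `vb` is a subword of `u`, and the bottom term from the second as soon as `a = b` and
`v` is a subword of `u`; the other summand then vanishes or lies strictly beyond.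
-/

noncomputable def qbinAux {A : Type*} [DecidableEq A] : List A → List A → Polynomial ℕ
  | _, [] => 1
  | [], _ :: _ => 0
  | a :: u, b :: v =>
      Polynomial.X ^ (v.length + 1) * qbinAux u (b :: v) +
        (if a = b then qbinAux u v else 0)

/-- The `q`-binomial coefficient `binom_q(u,v)` of two words. -/
noncomputable def qbin {A : Type*} [DecidableEq A] (u v : List A) : Polynomial ℕ :=
  qbinAux u.reverse v.reverse

namespace Polynomial

variable {R : Type*} [Semiring R]

instance [Subsingleton (AddUnits R)] : Subsingleton (AddUnits R[X]) where
  allEq u v := by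
    suffices ∀ w : AddUnits R[X], w = 0 by rw [this u, this v]
    refine fun w => AddUnits.ext <| ext fun n => ?_
    have hn := congrArg (coeff · n) w.val_neg
    rw [coeff_add, coeff_zero] at hn
    exact (add_eq_zero.1 hn).1

theorem support_add_eq_union [Subsingleton (AddUnits R)] (p q : R[X]) :
    (p + q).support = p.support ∪ q.support := by
  ext n
  simp only [mem_support_iff, coeff_add, Finset.mem_union, Ne, add_eq_zero]
  tauto

theorem natDegree_add_eq_max [Subsingleton (AddUnits R)] (p q : R[X]) :
    (p + q).natDegree = max p.natDegree q.natDegree := by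
  have hle {r s : R[X]} (h : r.support ⊆ s.support) : r.natDegree ≤ s.natDegree :=
    natDegree_le_natDegree (by simpa only [degree] using Finset.max_mono h)
  exact le_antisymm (natDegree_add_le p q) <|
    max_le (hle (support_add_eq_union p q ▸ Finset.subset_union_left))
      (hle (support_add_eq_union p q ▸ Finset.subset_union_right))

theorem trailingDegree_add_eq_min [Subsingleton (AddUnits R)] (p q : R[X]) :
    (p + q).trailingDegree = min p.trailingDegree q.trailingDegree := by
  simp only [trailingDegree, support_add_eq_union, Finset.min_union]
  rfl

theorem trailingCoeff_add_of_trailingDegree_lt {p q : R[X]}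
    (h : q.trailingDegree < p.trailingDegree) :
    (p + q).trailingCoeff = q.trailingCoeff := by
  have hq : q ≠ 0 := by rintro rfl; simp at h
  have hlt {m : ℕ} (hm : m ≤ q.natTrailingDegree) : (m : ℕ∞) < p.trailingDegree :=
    lt_of_le_of_lt (by exact_mod_cast hm) (trailingDegree_eq_natTrailingDegree hq ▸ h)
  have hcoeff : (p + q).coeff q.natTrailingDegree = q.trailingCoeff := by
    rw [coeff_add, coeff_eq_zero_of_lt_trailingDegree (hlt le_rfl), zero_add, trailingCoeff]
  have hne : (p + q).coeff q.natTrailingDegree ≠ 0 := hcoeff ▸ mt trailingCoeff_eq_zero.1 hq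
  have hdeg : (p + q).natTrailingDegree = q.natTrailingDegree := by
    refine le_antisymm (natTrailingDegree_le_of_ne_zero hne) <|
      le_natTrailingDegree (by rintro h0; simp [h0] at hne) fun m hm => ?_
    rw [coeff_add, coeff_eq_zero_of_lt_trailingDegree (hlt hm.le),
      coeff_eq_zero_of_lt_natTrailingDegree hm, add_zero]
  rw [trailingCoeff, hdeg, hcoeff]

@[simp] theorem trailingCoeff_one : (1 : R[X]).trailingCoeff = 1 := by
  simp [trailingCoeff]

@[simp] theorem trailingCoeff_X_pow [Nontrivial R] (n : ℕ) :
    (X ^ n : R[X]).trailingCoeff = 1 := by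
  simp [trailingCoeff]

end Polynomial

theorem List.prefix_iff_suffix_of_length_le {α : Type*} {l₁ l₂ : List α}
    (h : l₂.length ≤ l₁.length) : l₁ <+: l₂ ↔ l₁ <:+ l₂ :=
  ⟨fun hp => hp.eq_of_length_le h ▸ List.suffix_refl l₁,
    fun hs => hs.eq_of_length_le h ▸ List.prefix_refl l₁⟩

open Polynomial
open scoped List

-- `qbinAux x y = binom_q(x.reverse, y.reverse)`, so prefixes of `x` are reversed suffixes of `u`.
section
variable {A : Type*} [DecidableEq A]

@[simp] theorem qbinAux_nil_right (x : List A) : qbinAux x [] = 1 := by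
  cases x <;> rfl

@[simp] theorem qbinAux_nil_cons (b : A) (y : List A) : qbinAux [] (b :: y) = 0 := rfl

theorem qbinAux_cons_cons (a b : A) (x y : List A) :
    qbinAux (a :: x) (b :: y) =
      X ^ (y.length + 1) * qbinAux x (b :: y) + (if a = b then qbinAux x y else 0) := rfl

theorem qbinAux_ne_zero_iff {x y : List A} : qbinAux x y ≠ 0 ↔ y <+ x := by
  induction x generalizing y with
  | nil => cases y <;> simp
  | cons a x ih =>
    cases y with
    | nil => simp
    | cons b y =>
      rw [qbinAux_cons_cons, List.sublist_cons_iff, ← ih]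
      by_cases hab : a = b
      · subst hab
        simp [add_eq_zero, X_ne_zero, ← ih]
        tauto
      · simp [hab, Ne.symm hab, X_ne_zero]

theorem qbinAux_eq_zero_iff {x y : List A} : qbinAux x y = 0 ↔ ¬ y <+ x := by
  rw [← qbinAux_ne_zero_iff, not_not]

theorem natDegree_qbinAux_le (x y : List A) :
    (qbinAux x y).natDegree ≤ y.length * (x.length - y.length) := by
  induction x generalizing y with
  | nil => cases y <;> simp
  | cons a x ih =>
    cases y with
    | nil => simp
    | cons b y =>
      rw [qbinAux_cons_cons, natDegree_add_eq_max]
      simp only [List.length_cons, Nat.add_sub_add_right]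
      refine max_le ?_ ?_
      · by_cases hs : b :: y <+ x
        · have hlen : y.length + 1 ≤ x.length := hs.length_le
          have hx : x.length - y.length = x.length - (y.length + 1) + 1 := by omega
          rw [natDegree_X_pow_mul _ (qbinAux_ne_zero_iff.2 hs), hx, Nat.mul_succ]
          exact Nat.add_le_add_right (ih (b :: y)) _
        · simp [qbinAux_eq_zero_iff.2 hs]
      · split_ifs
        · exact (ih y).trans (Nat.mul_le_mul_right _ (Nat.le_succ _))
        · simp

theorem coeff_zero_qbinAux (x y : List A) :
    (qbinAux x y).coeff 0 = if y <+: x then 1 else 0 := by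
  induction x generalizing y with
  | nil => cases y <;> simp
  | cons a x ih =>
    cases y with
    | nil => simp
    | cons b y =>
      rw [qbinAux_cons_cons, coeff_add, coeff_X_pow_mul']
      by_cases hab : a = b
      · simp [hab, ih]
      · simp [hab, Ne.symm hab]

theorem coeff_length_mul_qbinAux (x y : List A) :
    (qbinAux x y).coeff (y.length * (x.length - y.length)) = if y <:+ x then 1 else 0 := by
  induction x generalizing y with
  | nil => cases y <;> simp
  | cons a x ih =>
    cases y with
    | nil => simp
    | cons b y =>
      by_cases hlen : y.length < x.length
      · have hx : x.length - y.length = x.length - (y.length + 1) + 1 := by omega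
        have hδ : (qbinAux x y).coeff ((y.length + 1) * (x.length - y.length)) = 0 := by
          refine coeff_eq_zero_of_natDegree_lt ((natDegree_qbinAux_le x y).trans_lt ?_)
          exact Nat.mul_lt_mul_of_pos_right (Nat.lt_succ_self _) (Nat.sub_pos_of_lt hlen)
        have hsuf : b :: y <:+ a :: x ↔ b :: y <:+ x := by
          rw [List.suffix_cons_iff, or_iff_right]
          exact fun h => hlen.ne (by simpa using congrArg List.length h)
        simp only [qbinAux_cons_cons, coeff_add, hsuf, List.length_cons, Nat.add_sub_add_right]
        rw [apply_ite (coeff · _), hδ, coeff_zero, ite_self, add_zero, hx, Nat.mul_succ,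
          coeff_X_pow_mul]
        simpa [hx] using ih (b :: y)
      · have hzero : (b :: y).length * ((a :: x).length - (b :: y).length) = 0 := by simp; omega
        have hsuf : b :: y <+: a :: x ↔ b :: y <:+ a :: x :=
          List.prefix_iff_suffix_of_length_le (by simpa using hlen)
        simp only [hzero, coeff_zero_qbinAux, hsuf]

theorem natDegree_qbinAux_le_add_natDegree_cons {x y : List A} {b : A} (hs : b :: y <+ x) :
    (qbinAux x y).natDegree ≤ y.length + (qbinAux x (b :: y)).natDegree := by
  induction x generalizing y b with
  | nil => simp at hs
  | cons c w ih =>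
    have hy : y <+ w := hs.of_cons_cons
    have hw : (qbinAux w y).natDegree ≤ (qbinAux (c :: w) (b :: y)).natDegree := by
      rw [qbinAux_cons_cons, natDegree_add_eq_max]
      rcases List.sublist_cons_iff.1 hs with hbw | ⟨r, hr, -⟩
      · rw [natDegree_X_pow_mul _ (qbinAux_ne_zero_iff.2 hbw)]
        have := ih hbw
        omega
      · obtain ⟨rfl, rfl⟩ := List.cons_eq_cons.1 hr
        simp
    have hcw : (qbinAux (c :: w) y).natDegree ≤ y.length + (qbinAux w y).natDegree := by
      cases y with
      | nil => simp
      | cons e y =>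
        rw [qbinAux_cons_cons, natDegree_add_eq_max,
          natDegree_X_pow_mul _ (qbinAux_ne_zero_iff.2 hy)]
        have := ih hy
        split_ifs <;> simp <;> omega
    omega

theorem trailingDegree_qbinAux_le_add_trailingDegree_cons (x y : List A) (b : A) :
    (qbinAux x y).trailingDegree ≤ y.length + (qbinAux x (b :: y)).trailingDegree := by
  induction x generalizing y b with
  | nil => cases y <;> simp
  | cons c w ih =>
    have hw : (qbinAux w y).trailingDegree ≤ (qbinAux (c :: w) (b :: y)).trailingDegree := by
      rw [qbinAux_cons_cons, trailingDegree_add_eq_min, trailingDegree_mul, trailingDegree_X_pow]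
      refine le_min ((ih y b).trans ?_) ?_
      · gcongr
        exact_mod_cast Nat.le_succ _
      · split_ifs <;> simp
    have hcw : (qbinAux (c :: w) y).trailingDegree ≤ y.length + (qbinAux w y).trailingDegree := by
      cases y with
      | nil => simp
      | cons e y =>
        rw [qbinAux_cons_cons, trailingDegree_add_eq_min, trailingDegree_mul, trailingDegree_X_pow]
        exact min_le_left _ _ |>.trans_eq (by simp)
    exact hcw.trans (by gcongr)

theorem monic_qbinAux {x y : List A} (hs : y <+ x) : (qbinAux x y).Monic := by
  induction x generalizing y with
  | nil => simp [List.sublist_nil.1 hs]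
  | cons a x ih =>
    cases y with
    | nil => simp
    | cons b y =>
      rw [qbinAux_cons_cons]
      by_cases hbx : b :: y <+ x
      · refine ((monic_X_pow _).mul (ih hbx)).add_of_left (degree_lt_degree ?_)
        rw [natDegree_X_pow_mul _ (qbinAux_ne_zero_iff.2 hbx)]
        have := natDegree_qbinAux_le_add_natDegree_cons hbx
        split_ifs
        · omega
        · simp
      · obtain ⟨r, hr, hrx⟩ := (List.sublist_cons_iff.1 hs).resolve_left hbx
        obtain ⟨rfl, rfl⟩ := List.cons_eq_cons.1 hr
        simpa [qbinAux_eq_zero_iff.2 hbx] using ih hrx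

theorem trailingCoeff_qbinAux {x y : List A} (hs : y <+ x) : (qbinAux x y).trailingCoeff = 1 := by
  induction x generalizing y with
  | nil => simp [List.sublist_nil.1 hs]
  | cons a x ih =>
    cases y with
    | nil => simp
    | cons b y =>
      rw [qbinAux_cons_cons]
      by_cases hδ : a = b ∧ y <+ x
      · rw [if_pos hδ.1]
        by_cases hbx : b :: y <+ x
        · refine (trailingCoeff_add_of_trailingDegree_lt ?_).trans (ih hδ.2)
          have hgap := trailingDegree_qbinAux_le_add_trailingDegree_cons x y b
          rw [trailingDegree_eq_natTrailingDegree (qbinAux_ne_zero_iff.2 hbx)] at hgap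
          rw [trailingDegree_mul, trailingDegree_X_pow,
            trailingDegree_eq_natTrailingDegree (qbinAux_ne_zero_iff.2 hbx)]
          exact hgap.trans_lt (by norm_cast; omega)
        · simpa [qbinAux_eq_zero_iff.2 hbx] using ih hδ.2
      · have hbx : b :: y <+ x := by
          refine (List.sublist_cons_iff.1 hs).resolve_right ?_
          rintro ⟨r, hr, hrx⟩
          obtain ⟨rfl, rfl⟩ := List.cons_eq_cons.1 hr
          exact hδ ⟨rfl, hrx⟩
        have hterm : (if a = b then qbinAux x y else 0) = 0 := by
          split_ifs with hab
          · exact qbinAux_eq_zero_iff.2 fun h => hδ ⟨hab, h⟩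
          · rfl
        rw [hterm, add_zero, trailingCoeff_mul, trailingCoeff_X_pow, one_mul, ih hbx]

end

theorem qbin_degree_and_extreme_coeffs_general (A : Type*) [DecidableEq A]
    (u v : List A) :
    (qbin u v).natDegree ≤ v.length * (u.length - v.length) ∧
    (qbin u v).coeff (v.length * (u.length - v.length)) = (if v <+: u then 1 else 0) ∧
    (qbin u v).coeff 0 = (if v <:+ u then 1 else 0) ∧
    (v.Sublist u → (qbin u v).leadingCoeff = 1 ∧ (qbin u v).trailingCoeff = 1) := by
  unfold qbin
  have hdeg := natDegree_qbinAux_le u.reverse v.reverse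
  have htop := coeff_length_mul_qbinAux u.reverse v.reverse
  have hzero := coeff_zero_qbinAux u.reverse v.reverse
  simp only [List.length_reverse, List.reverse_suffix, List.reverse_prefix] at hdeg htop hzero
  refine ⟨hdeg, htop, hzero, fun hs => ?_⟩
  have hs' : v.reverse <+ u.reverse := List.reverse_sublist.2 hs
  exact ⟨(monic_qbinAux hs').leadingCoeff, trailingCoeff_qbinAux hs'⟩

/-- For `|v| ≤ |u|`: the degree of `binom_q(u,v)` is at most `|v|(|u|-|v|)`;
the coefficient of `q^{|v|(|u|-|v|)}` is `1` iff `v` is a prefix of `u` (else `0`);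
the constant coefficient is `1` iff `v` is a suffix of `u` (else `0`);
and if `v` is a subword of `u`, then `binom_q(u,v)` is monic and its
lowest-degree nonzero coefficient is `1`. -/
theorem qbin_degree_and_extreme_coeffs (A : Type*) [Fintype A] [DecidableEq A]
    (u v : List A) (h : v.length ≤ u.length) :
    (qbin u v).natDegree ≤ v.length * (u.length - v.length) ∧
    (qbin u v).coeff (v.length * (u.length - v.length)) = (if v <+: u then 1 else 0) ∧
    (qbin u v).coeff 0 = (if v <:+ u then 1 else 0) ∧
    (v.Sublist u → (qbin u v).leadingCoeff = 1 ∧ (qbin u v).trailingCoeff = 1) :=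
  qbin_degree_and_extreme_coeffs_general A u v
end

section
/- (q-analogue of the Manvel–Meyerowitz–Schwenk–Smith–Stockmeyer identity.) Let k be an integer and u, x words over A with |u| ≥ k ≥ |x|. Then gauss(|u|−|x|, k−|x|)·binom_q(u,x) = Σ_{t ∈ A^k} binom_q(u,t)·binom_q(t,x), where the sum ranges over all words t of length k over A. -/
/-- The Gaussian binomial coefficient `gauss(m,n) ∈ ℕ[q]`, defined by the
`q`-Pascal recursion `gauss(m+1,n+1) = q^{n+1}·gauss(m,n+1) + gauss(m,n)`. -/
noncomputable def gauss : ℕ → ℕ → Polynomial ℕ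
  | _, 0 => 1
  | 0, _ + 1 => 0
  | m + 1, n + 1 => Polynomial.X ^ (n + 1) * gauss m (n + 1) + gauss m n

/-! Induct on `u`, peeling off its last letter `a`, and write each word of length `k + 1` as
`t b`. The recursion for `binom_q(ua, tb)` splits the sum into `q^{k+1}` times the same sum for `u`
and the sum of `binom_q(u,t)·binom_q(ta,x)` over `|t| = k`; expanding `binom_q(ta,x)` by the
recursion in the last letter of `x` leaves only sums of the same shape for `u`, given by the
induction hypothesis, and the Gaussian coefficients recombine by their `q`-Pascal rule. -/

open Polynomial

@[simp]
lemma gauss_zero_right (m : ℕ) : gauss m 0 = 1 := by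
  cases m <;> rfl

lemma gauss_succ_succ (m n : ℕ) :
    gauss (m + 1) (n + 1) = X ^ (n + 1) * gauss m (n + 1) + gauss m n := rfl

lemma sum_ofFn_succ {A M : Type*} [Fintype A] [AddCommMonoid M] (k : ℕ)
    (F : List A → M) :
    ∑ t : Fin (k + 1) → A, F (List.ofFn t) = ∑ b : A, ∑ t : Fin k → A, F (List.ofFn t ++ [b]) := by
  rw [← (Fin.snocEquiv fun _ => A).sum_comp, Fintype.sum_prod_type]
  simp only [Fin.snocEquiv_apply, List.ofFn_succ', Fin.snoc_castSucc, Fin.snoc_last,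
    List.concat_eq_append]

lemma gauss_sub_mul_X_pow (L k m : ℕ) (Q : ℕ[X]) (hm : m ≤ k + 1) (hQ : L < m → Q = 0) :
    gauss (L + 1 - m) (k + 1 - m) * (X ^ m * Q) =
      X ^ (k + 1) * (gauss (L - m) (k + 1 - m) * Q) +
        X ^ m * (if m ≤ k then gauss (L - m) (k - m) * Q else 0) := by
  rcases lt_or_ge L m with hL | hL
  · simp [hQ hL]
  obtain ⟨n, rfl⟩ := Nat.exists_eq_add_of_le hL
  rcases hm.lt_or_eq with hmk | rfl
  · obtain ⟨j, rfl⟩ := Nat.exists_eq_add_of_le (Nat.lt_succ_iff.mp hmk)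
    have hn : m + n + 1 - m = n + 1 := by omega
    have hj : m + j + 1 - m = j + 1 := by omega
    rw [hn, hj, Nat.add_sub_cancel_left, Nat.add_sub_cancel_left, if_pos le_self_add,
      gauss_succ_succ]
    ring
  · simp

section Words

variable {A : Type*} [DecidableEq A]

@[simp]
lemma qbin_nil_right (u : List A) : qbin u [] = 1 := by
  unfold qbin
  cases u.reverse <;> rfl

lemma qbin_nil_append_singleton (v : List A) (b : A) : qbin [] (v ++ [b]) = 0 := by
  simp [qbin, qbinAux]

lemma qbin_append_singleton (u v : List A) (a b : A) :
    qbin (u ++ [a]) (v ++ [b]) =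
      X ^ (v.length + 1) * qbin u (v ++ [b]) + if a = b then qbin u v else 0 := by
  simp [qbin, qbinAux]

lemma qbin_eq_zero_of_length_lt {u v : List A} (h : u.length < v.length) : qbin u v = 0 := by
  induction u using List.reverseRecOn generalizing v with
  | nil =>
    obtain rfl | ⟨v, b, rfl⟩ := v.eq_nil_or_concat'
    · simp at h
    · exact qbin_nil_append_singleton v b
  | append_singleton u a ih =>
    obtain rfl | ⟨v, b, rfl⟩ := v.eq_nil_or_concat'
    · simp at h
    · simp only [List.length_append, List.length_singleton] at h
      rw [qbin_append_singleton, ih (by simp; omega), ih (by omega)]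
      simp

variable [Fintype A]

noncomputable def qbinSum (k : ℕ) (u x : List A) : ℕ[X] :=
  ∑ t : Fin k → A, qbin u (List.ofFn t) * qbin (List.ofFn t) x

@[simp]
lemma qbinSum_zero_nil (u : List A) : qbinSum 0 u [] = 1 := by
  simp [qbinSum]

lemma qbinSum_eq_zero_of_lt {k : ℕ} {x : List A} (h : k < x.length) (u : List A) :
    qbinSum k u x = 0 :=
  Finset.sum_eq_zero fun t _ => by
    rw [qbin_eq_zero_of_length_lt (u := List.ofFn t) (by simpa), mul_zero]

lemma qbinSum_succ_nil_left (k : ℕ) (x : List A) : qbinSum (k + 1) [] x = 0 :=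
  Finset.sum_eq_zero fun t _ => by rw [qbin_eq_zero_of_length_lt (by simp), zero_mul]

lemma qbinSum_succ_append_singleton (k : ℕ) (u x : List A) (a : A) :
    qbinSum (k + 1) (u ++ [a]) x =
      X ^ (k + 1) * qbinSum (k + 1) u x +
        ∑ t : Fin k → A, qbin u (List.ofFn t) * qbin (List.ofFn t ++ [a]) x := by
  rw [qbinSum, sum_ofFn_succ k fun w => qbin (u ++ [a]) w * qbin w x, qbinSum,
    sum_ofFn_succ k fun w => qbin u w * qbin w x]
  simp only [qbin_append_singleton, List.length_ofFn, add_mul, ite_mul, zero_mul,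
    Finset.sum_add_distrib, Finset.mul_sum, mul_assoc, Finset.sum_ite_irrel, Finset.sum_const_zero,
    Finset.sum_ite_eq, Finset.mem_univ, if_true]

lemma sum_qbin_mul_qbin_append_singleton_nil (k : ℕ) (u : List A) (a : A) :
    ∑ t : Fin k → A, qbin u (List.ofFn t) * qbin (List.ofFn t ++ [a]) [] = qbinSum k u [] := by
  simp only [qbinSum, qbin_nil_right]

lemma sum_qbin_mul_qbin_append_singleton (k : ℕ) (u x : List A) (a c : A) :
    ∑ t : Fin k → A, qbin u (List.ofFn t) * qbin (List.ofFn t ++ [a]) (x ++ [c]) =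
      X ^ (x.length + 1) * qbinSum k u (x ++ [c]) + if a = c then qbinSum k u x else 0 := by
  simp only [qbinSum, qbin_append_singleton, mul_add, mul_ite, mul_zero, Finset.sum_add_distrib,
    Finset.mul_sum, Finset.sum_ite_irrel, Finset.sum_const_zero, mul_left_comm]

theorem qbinSum_eq_gauss_mul_qbin (u : List A) {k : ℕ} {x : List A} (hx : x.length ≤ k) :
    qbinSum k u x = gauss (u.length - x.length) (k - x.length) * qbin u x := by
  induction u using List.reverseRecOn generalizing k x with
  | nil =>
    cases k with
    | zero =>
      obtain rfl : x = [] := List.eq_nil_of_length_eq_zero (by omega)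
      simp
    | succ k =>
      rw [qbinSum_succ_nil_left]
      obtain rfl | ⟨x, c, rfl⟩ := x.eq_nil_or_concat'
      · simp [gauss]
      · rw [qbin_nil_append_singleton, mul_zero]
  | append_singleton u a ih =>
    cases k with
    | zero =>
      obtain rfl : x = [] := List.eq_nil_of_length_eq_zero (by omega)
      simp
    | succ k =>
      rw [qbinSum_succ_append_singleton, ih hx]
      obtain rfl | ⟨x, c, rfl⟩ := x.eq_nil_or_concat'
      · rw [sum_qbin_mul_qbin_append_singleton_nil, ih (Nat.zero_le k)]
        simp [gauss_succ_succ]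
      · simp only [List.length_append, List.length_singleton] at hx ⊢
        have hS : qbinSum k u (x ++ [c]) = if x.length + 1 ≤ k then
            gauss (u.length - (x.length + 1)) (k - (x.length + 1)) * qbin u (x ++ [c]) else 0 := by
          split_ifs with h
          · simpa using ih (x := x ++ [c]) (by simpa)
          · exact qbinSum_eq_zero_of_lt (by simp; omega) u
        have hQ : u.length < x.length + 1 → qbin u (x ++ [c]) = 0 := fun h =>
          qbin_eq_zero_of_length_lt (by simp; omega)
        rw [sum_qbin_mul_qbin_append_singleton, qbin_append_singleton, ih (x := x) (by omega), hS,
          mul_add, gauss_sub_mul_X_pow _ _ _ _ hx hQ, Nat.add_sub_add_right, Nat.add_sub_add_right]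
        split_ifs <;> ring

end Words

theorem qbin_mmsss_general (A : Type*) [Fintype A] [DecidableEq A]
    (k : ℕ) (u x : List A) (h1 : x.length ≤ k) :
    gauss (u.length - x.length) (k - x.length) * qbin u x =
      ∑ t : Fin k → A, qbin u (List.ofFn t) * qbin (List.ofFn t) x :=
  (qbinSum_eq_gauss_mul_qbin u h1).symm

/-- The `q`-analogue of the Manvel–Meyerowitz–Schwenk–Smith–Stockmeyer identity:
for `|u| ≥ k ≥ |x|`,
`gauss(|u|-|x|, k-|x|)·binom_q(u,x) = Σ_{t ∈ A^k} binom_q(u,t)·binom_q(t,x)`.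
Words of length `k` are parametrized by functions `Fin k → A`. -/
theorem qbin_mmsss (A : Type*) [Fintype A] [DecidableEq A]
    (k : ℕ) (u x : List A) (h1 : x.length ≤ k) (h2 : k ≤ u.length) :
    gauss (u.length - x.length) (k - x.length) * qbin u x =
      ∑ t : Fin k → A, qbin u (List.ofFn t) * qbin (List.ofFn t) x :=
  qbin_mmsss_general A k u x h1
end

section
/- For every word u ∈ A* and all letters a_1, …, a_n ∈ A: u ⧢_q (a_1⋯a_n) = Σ q^{Σ_{i=1}^n i·|u_i|} · (u_0 a_1 u_1 a_2 ⋯ u_{n-1} a_n u_n), where the sum ranges over all factorizations u = u_0 u_1 ⋯ u_n with u_0, …, u_n ∈ A*. -/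
/-- Auxiliary definition of the `q`-shuffle, with both input words and all
output words reversed (so that the recursion of the paper, which appends
letters on the right, becomes a recursion on heads of lists). -/
noncomputable def qShuffleAux {A : Type*} [DecidableEq A] :
    List A → List A → (List A →₀ Polynomial ℕ)
  | [], v => Finsupp.single v 1
  | a :: u, [] => Finsupp.single (a :: u) 1
  | a :: u, b :: v =>
      (Polynomial.X : Polynomial ℕ) ^ (v.length + 1) •
          Finsupp.mapDomain (a :: ·) (qShuffleAux u (b :: v)) +
        Finsupp.mapDomain (b :: ·) (qShuffleAux (a :: u) v)

/-- The `q`-shuffle `u ⧢_q v` of two words, a noncommutative polynomial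
(finitely supported function from words to `ℕ[q]`), defined by
`u ⧢_q ε = ε ⧢_q u = 1·u` and
`ua ⧢_q vb = q^{|vb|}·(u ⧢_q vb)·a + (ua ⧢_q v)·b`. -/
noncomputable def qShuffle {A : Type*} [DecidableEq A] (u v : List A) :
    List A →₀ Polynomial ℕ :=
  Finsupp.mapDomain List.reverse (qShuffleAux u.reverse v.reverse)

/-- `glue [u₀, u₁, …, u_n] [a₁, …, a_n] = u₀ a₁ u₁ a₂ ⋯ u_{n-1} a_n u_n`. -/
def glue {A : Type*} : List (List A) → List A → List A
  | [], as => as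
  | u0 :: us, [] => u0 ++ glue us []
  | u0 :: us, a :: as => u0 ++ a :: glue us as

/-- The weight `Σ_{i} i·|uᵢ|` of a factorization `[u₀, u₁, …, u_n]`. -/
def qweight {A : Type*} (us : List (List A)) : ℕ :=
  ∑ i ∈ Finset.range us.length, i * (us.getD i []).length

/-!
On reversed words the recursion reads `au ⧢_q bv = q^{|bv|}·a(u ⧢_q bv) + b(au ⧢_q v)`.
Correspondingly, a factorization `w₀ w₁ ⋯ w_n` of `au` either has `w₀` beginning with `a` or has
`w₀ = ε`, and the sum over factorizations splits along these two cases. In this reversed picture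
each letter of `w_j` costs a factor `q^{n-j}`; reversing the factorization back turns the weight
`Σ_j (n-j)·|w_j|` into `Σ_i i·|u_i|`.
-/

open Polynomial

theorem Finsupp.mapDomain_list_sum {α β M : Type*} [AddCommMonoid M] (f : α → β)
    (l : List (α →₀ M)) :
    Finsupp.mapDomain f l.sum = (l.map (Finsupp.mapDomain f)).sum :=
  map_list_sum (Finsupp.mapDomain.addMonoidHom f) l

section Words

variable {A : Type*}

def factorizations : ℕ → List A → List (List (List A))
  | 0, u => [[u]]
  | n + 1, [] => (factorizations n []).map ([] :: ·)
  | n + 1, a :: u =>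
      ((factorizations (n + 1) u).map fun ws => (a :: ws.headI) :: ws.tail) ++
        (factorizations n (a :: u)).map ([] :: ·)
termination_by n u => (n, u.length)

theorem mem_factorizations : ∀ (n : ℕ) (u : List A) (us : List (List A)),
    us ∈ factorizations n u ↔ us.length = n + 1 ∧ us.flatten = u
  | 0, u, us => by
    simp only [factorizations, List.mem_singleton]
    constructor
    · rintro rfl
      simp
    · rintro ⟨hlen, hflat⟩
      obtain ⟨t, rfl⟩ := List.length_eq_one_iff.1 hlen
      simp_all
  | n + 1, [], us => by
    cases us with
    | nil => simp [factorizations]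
    | cons t rest =>
      simp [factorizations, mem_factorizations n [] rest, and_left_comm]
  | n + 1, a :: u, us => by
    simp only [factorizations, List.mem_append, List.mem_map]
    constructor
    · rintro (⟨ws, hws, rfl⟩ | ⟨ws, hws, rfl⟩)
      · obtain ⟨hlen, hflat⟩ := (mem_factorizations (n + 1) u ws).1 hws
        cases ws with
        | nil => simp at hlen
        | cons t rest => simp_all
      · simp_all [mem_factorizations n (a :: u) ws]
    · rintro ⟨hlen, hflat⟩
      rcases us with _ | ⟨_ | ⟨a', t⟩, rest⟩
      · simp at hlen
      · exact .inr ⟨rest, (mem_factorizations n (a :: u) rest).2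
          ⟨by simpa using hlen, by simpa using hflat⟩, rfl⟩
      · simp only [List.flatten_cons, List.cons_append, List.cons.injEq] at hflat
        obtain ⟨rfl, hflat⟩ := hflat
        exact .inl ⟨t :: rest, (mem_factorizations (n + 1) u (t :: rest)).2
          ⟨by simpa using hlen, hflat⟩, rfl⟩
termination_by n u => (n, u.length)

theorem nodup_factorizations : ∀ (n : ℕ) (u : List A), (factorizations n u).Nodup
  | 0, u => by simp [factorizations]
  | n + 1, [] => by
    rw [factorizations]
    exact (nodup_factorizations n []).map List.cons_injective
  | n + 1, a :: u => by
    rw [factorizations]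
    refine List.Nodup.append ?_ ((nodup_factorizations n (a :: u)).map List.cons_injective) ?_
    · refine (nodup_factorizations (n + 1) u).map_on fun x hx y hy hxy => ?_
      obtain ⟨hx, -⟩ := (mem_factorizations _ _ x).1 hx
      obtain ⟨hy, -⟩ := (mem_factorizations _ _ y).1 hy
      match x, y, hx, hy with
      | _ :: _, _ :: _, _, _ => simpa using hxy
    · intro x hx hy
      obtain ⟨_, -, rfl⟩ := List.mem_map.1 hx
      obtain ⟨_, -, h⟩ := List.mem_map.1 hy
      simp at h
termination_by n u => (n, u.length)

theorem factorizations_nil (n : ℕ) :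
    factorizations n ([] : List A) = [List.replicate (n + 1) []] := by
  induction n with
  | zero => simp [factorizations]
  | succ n ih => simp [factorizations, ih, List.replicate_succ]

theorem glue_replicate_nil (n : ℕ) (v : List A) : glue (List.replicate n []) v = v := by
  induction n generalizing v with
  | zero => rfl
  | succ n ih => cases v <;> simp [List.replicate_succ, glue, ih]

theorem glue_append_singleton : ∀ (bs : List A) (ws : List (List A)) (t : List A) (b : A),
    ws.length = bs.length + 1 → glue (ws ++ [t]) (bs ++ [b]) = glue ws bs ++ b :: t
  | [], ws, t, b, h => by
    obtain ⟨w, rfl⟩ := List.length_eq_one_iff.1 h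
    simp [glue]
  | c :: bs, [], t, b, h => by simp at h
  | c :: bs, w :: ws, t, b, h => by
    simp [glue, glue_append_singleton bs ws t b (by simpa using h)]

def reverseFactorization (ws : List (List A)) : List (List A) :=
  (ws.map List.reverse).reverse

theorem reverseFactorization_involutive :
    Function.Involutive (reverseFactorization (A := A)) := fun ws => by
  simp [reverseFactorization, List.map_reverse]

@[simp]
theorem length_reverseFactorization (ws : List (List A)) :
    (reverseFactorization ws).length = ws.length := by
  simp [reverseFactorization]

@[simp]
theorem flatten_reverseFactorization (ws : List (List A)) :
    (reverseFactorization ws).flatten = ws.flatten.reverse :=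
  List.reverse_flatten.symm

theorem glue_reverseFactorization : ∀ (bs : List A) (ws : List (List A)),
    ws.length = bs.length + 1 → glue (reverseFactorization ws) bs.reverse = (glue ws bs).reverse
  | [], ws, h => by
    obtain ⟨w, rfl⟩ := List.length_eq_one_iff.1 h
    simp [reverseFactorization, glue]
  | b :: bs, [], h => by simp at h
  | b :: bs, w :: ws, h => by
    have hlen : ws.length = bs.length + 1 := by simpa using h
    have := glue_reverseFactorization bs ws hlen
    simp only [reverseFactorization] at this ⊢
    simp only [List.map_cons, List.reverse_cons, glue, List.reverse_append]
    rw [glue_append_singleton _ _ _ _ (by simpa using hlen), this]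
    simp

theorem mem_factorizations_reverse_iff {n : ℕ} {u : List A} {ws : List (List A)} :
    reverseFactorization ws ∈ factorizations n u.reverse ↔ ws ∈ factorizations n u := by
  simp [mem_factorizations, List.reverse_eq_iff]

theorem map_reverseFactorization_perm (n : ℕ) (u : List A) :
    ((factorizations n u.reverse).map reverseFactorization).Perm (factorizations n u) := by
  refine (List.perm_ext_iff_of_nodup
    ((nodup_factorizations _ _).map reverseFactorization_involutive.injective)
    (nodup_factorizations _ _)).2 fun ws => ?_
  rw [List.mem_map, ← mem_factorizations_reverse_iff (ws := ws)]
  exact ⟨by rintro ⟨vs, hvs, rfl⟩; rwa [reverseFactorization_involutive],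
    fun h => ⟨_, h, reverseFactorization_involutive ws⟩⟩

/-- `revWeight [w₀, …, w_n] = Σ_j (n-j)·|w_j|`. -/
def revWeight : List (List A) → ℕ
  | [] => 0
  | w :: ws => ws.length * w.length + revWeight ws

theorem revWeight_replicate_nil (n : ℕ) : revWeight (List.replicate n ([] : List A)) = 0 := by
  induction n with
  | zero => rfl
  | succ n ih => simp [List.replicate_succ, revWeight, ih]

theorem qweight_append_singleton (ws : List (List A)) (t : List A) :
    qweight (ws ++ [t]) = qweight ws + ws.length * t.length := by
  simp only [qweight, List.length_append, List.length_singleton, Finset.sum_range_succ]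
  congr 1
  · exact Finset.sum_congr rfl fun i hi => by
      rw [List.getD_append _ _ _ _ (Finset.mem_range.1 hi)]
  · rw [List.getD_append_right] <;> simp

theorem qweight_reverseFactorization (ws : List (List A)) :
    qweight (reverseFactorization ws) = revWeight ws := by
  induction ws with
  | nil => rfl
  | cons w ws ih =>
    simp only [reverseFactorization] at ih ⊢
    simp only [List.map_cons, List.reverse_cons, revWeight, qweight_append_singleton, ih]
    simp [Nat.add_comm]

end Words

section QShuffle

variable {A : Type*} [DecidableEq A]

theorem qShuffleAux_eq_sum_factorizations : ∀ (u v : List A),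
    qShuffleAux u v = ((factorizations v.length u).map fun ws =>
      Finsupp.single (glue ws v) ((X : ℕ[X]) ^ revWeight ws)).sum
  | [], v => by
    simp [qShuffleAux, factorizations_nil, glue_replicate_nil, revWeight_replicate_nil]
  | a :: u, [] => by simp [qShuffleAux, factorizations, glue, revWeight]
  | a :: u, b :: v => by
    have first_part_nonempty :
        (X : ℕ[X]) ^ (v.length + 1) • Finsupp.mapDomain (a :: ·) (qShuffleAux u (b :: v)) =
          ((factorizations (v.length + 1) u).map fun ws =>
            Finsupp.single (glue ((a :: ws.headI) :: ws.tail) (b :: v))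
              ((X : ℕ[X]) ^ revWeight ((a :: ws.headI) :: ws.tail))).sum := by
      rw [qShuffleAux_eq_sum_factorizations u (b :: v),
        Finsupp.mapDomain_list_sum, List.smul_sum, List.map_map,
        List.map_map]
      refine congrArg List.sum (List.map_congr_left fun ws hws => ?_)
      obtain ⟨hlen, -⟩ := (mem_factorizations _ _ _).1 hws
      rcases ws with _ | ⟨t, rest⟩
      · simp at hlen
      · have hrest : rest.length = v.length + 1 := by simpa using hlen
        simp only [Function.comp_apply, Finsupp.mapDomain_single, Finsupp.smul_single,
          smul_eq_mul, ← pow_add, List.headI_cons, List.tail_cons, glue, revWeight,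
          List.length_cons, hrest, List.cons_append]
        congr 2
        ring
    have first_part_empty :
        Finsupp.mapDomain (b :: ·) (qShuffleAux (a :: u) v) =
          ((factorizations v.length (a :: u)).map fun ws =>
            Finsupp.single (glue ([] :: ws) (b :: v)) ((X : ℕ[X]) ^ revWeight ([] :: ws))).sum := by
      rw [qShuffleAux_eq_sum_factorizations (a :: u) v,
        Finsupp.mapDomain_list_sum, List.map_map]
      refine congrArg List.sum (List.map_congr_left fun ws _ => ?_)
      simp [glue, revWeight]
    rw [qShuffleAux, first_part_nonempty, first_part_empty, List.length_cons, factorizations,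
      List.map_append, List.sum_append, List.map_map, List.map_map]
    rfl
termination_by u v => (v.length, u.length)

theorem qShuffle_eq_sum_factorizations_list (u v : List A) :
    qShuffle u v = ((factorizations v.length u).map fun us =>
      Finsupp.single (glue us v) ((X : ℕ[X]) ^ qweight us)).sum := by
  rw [qShuffle, qShuffleAux_eq_sum_factorizations, List.length_reverse,
    Finsupp.mapDomain_list_sum, List.map_map,
    ← ((map_reverseFactorization_perm v.length u).map _).sum_eq, List.map_map]
  refine congrArg List.sum (List.map_congr_left fun ws hws => ?_)
  obtain ⟨hlen, -⟩ := (mem_factorizations _ _ _).1 hws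
  simp [Finsupp.mapDomain_single, qweight_reverseFactorization,
    ← glue_reverseFactorization v.reverse ws (by simpa using hlen)]

end QShuffle

theorem qShuffle_eq_sum_factorizations_general (A : Type*) [DecidableEq A]
    (u v : List A) :
    qShuffle u v =
      ∑ᶠ us ∈ {us : List (List A) | us.length = v.length + 1 ∧ us.flatten = u},
        Finsupp.single (glue us v) ((Polynomial.X : Polynomial ℕ) ^ qweight us) := by
  have hset : {us : List (List A) | us.length = v.length + 1 ∧ us.flatten = u} =
      ↑(factorizations v.length u).toFinset := by
    ext us
    simp [mem_factorizations]
  rw [hset, finsum_mem_coe_finset, List.sum_toFinset _ (nodup_factorizations _ _),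
    qShuffle_eq_sum_factorizations_list]

/-- `u ⧢_q (a₁⋯a_n) = Σ q^{Σ_{i=1}^n i·|uᵢ|} · (u₀ a₁ u₁ a₂ ⋯ u_{n-1} a_n u_n)`,
the sum ranging over all factorizations `u = u₀ u₁ ⋯ u_n`. -/
theorem qShuffle_eq_sum_factorizations (A : Type*) [Fintype A] [DecidableEq A]
    (u v : List A) :
    qShuffle u v =
      ∑ᶠ us ∈ {us : List (List A) | us.length = v.length + 1 ∧ us.flatten = u},
        Finsupp.single (glue us v) ((Polynomial.X : Polynomial ℕ) ^ qweight us) :=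
  qShuffle_eq_sum_factorizations_general A u v
end
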